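/- arXiv:2011.01032 — 4 statements merged into one kernel-verified Lean document; each statement's English description precedes it below -/
import Mathlib

section
/- For positive integers n and r and for every integer k ≥ r, the identity ∑_{l=0}^{r} (−1)^l C(r,l) C(n+r, k−l) = (n+r)!/(k!(2r+n−k)!) · r! ∑_{l=0}^{r} (−1)^l C(2r+n−k, r−l) C(k,l) holds, where C denotes binomial coefficients (equal to 0 when the top argument is less than the bottom argument or arguments are negative), and where we assume k ≤ 2r+n so that the factorials are defined. -/
open Finset

/-- For positive `n, r` and `r ≤ k ≤ 2r + n`, the coefficient
`C_k = ∑ (−1)^l C(r,l) C(n+r, k−l)` can be rewritten as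
`(n+r)!/(k!(2r+n−k)!) · r! ∑ (−1)^l C(2r+n−k, r−l) C(k,l)`. -/
theorem coefficient_rewriting (n r k : ℕ) (hn : 0 < n) (hr : 0 < r)
    (hk1 : r ≤ k) (hk2 : k ≤ 2 * r + n) :
    ∑ l ∈ range (r + 1), (-1 : ℚ) ^ l * (r.choose l) * ((n + r).choose (k - l)) =
      ((n + r).factorial : ℚ) / ((k.factorial : ℚ) * ((2 * r + n - k).factorial : ℚ)) *
        ((r.factorial : ℚ) *
          ∑ l ∈ range (r + 1),
            (-1 : ℚ) ^ l * ((2 * r + n - k).choose (r - l)) * (k.choose l)) := by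
  rw [Finset.mul_sum, Finset.mul_sum]
  refine Finset.sum_congr rfl fun l hl => ?_
  simp only [Finset.mem_range] at hl
  have hl' : l ≤ r := Nat.lt_succ_iff.mp hl
  have hlk : l ≤ k := hl'.trans hk1
  by_cases h : k - l ≤ n + r
  · have h2 : r - l ≤ 2 * r + n - k := by omega
    rw [Nat.cast_choose ℚ hl', Nat.cast_choose ℚ h, Nat.cast_choose ℚ h2,
      Nat.cast_choose ℚ hlk]
    have e1 : n + r - (k - l) = n + r + l - k := by omega
    have e2 : 2 * r + n - k - (r - l) = n + r + l - k := by omega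
    rw [e1, e2]
    have f0 : ∀ m : ℕ, (m.factorial : ℚ) ≠ 0 := fun m =>
      Nat.cast_ne_zero.mpr m.factorial_ne_zero
    field_simp
  · have h1 : (n + r).choose (k - l) = 0 := Nat.choose_eq_zero_of_lt (by omega)
    have h2 : (2 * r + n - k).choose (r - l) = 0 := Nat.choose_eq_zero_of_lt (by omega)
    rw [h1, h2]
    push_cast
    ring
end

section
/- Let n, α, μ be nonnegative integers with 0 ≤ μ < n−α−1. Define a sequence h: ℕ → ℕ by h(2) = C(n−α−1, 2) + μ and the recursion h(d+1) ≤ h(d)^(d) for d ≥ 2 (Macaulay growth bound), where ℓ^(d) is the Macaulay operation. Then if h(d) ≤ C(n−α−1, d) + C(μ, d−1) for some d ≥ 2, it follows that h(d+1) ≤ C(n−α−1, d+1) + C(μ, d); consequently h(n−α) ≤ C(n−α−1, n−α) + C(μ, n−α−1) = 0. -/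
/-- The largest `a` with `C(a, d) ≤ ℓ` (for `d ≥ 1`, such `a` is at most `ℓ + d`). -/
def macaulayMax (ℓ d : ℕ) : ℕ :=
  Nat.findGreatest (fun a => Nat.choose a d ≤ ℓ) (ℓ + d)

/-- The Macaulay operation `ℓ ↦ ℓ^(d)`: if `ℓ = C(ℓ_d, d) + ⋯ + C(ℓ_1, 1)` is the
Macaulay expansion of `ℓ` with respect to `d`, then
`macaulayOp ℓ d = ℓ^(d) = C(ℓ_d, d+1) + ⋯ + C(ℓ_1, 2)`, computed greedily. -/
def macaulayOp : ℕ → ℕ → ℕ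
  | _, 0 => 0
  | ℓ, 1 => ℓ.choose 2
  | ℓ, (d + 2) =>
      Nat.choose (macaulayMax ℓ (d + 2)) (d + 3) +
        macaulayOp (ℓ - Nat.choose (macaulayMax ℓ (d + 2)) (d + 2)) (d + 1)

/-- `ℓ + 1 ≤ C(ℓ + d, d)` for `d ≥ 1`. -/
lemma choose_lower (d ℓ : ℕ) (hd : 1 ≤ d) : ℓ + 1 ≤ (ℓ + d).choose d := by
  induction d with
  | zero => omega
  | succ e ih =>
    rcases Nat.eq_zero_or_pos e with he | he
    · subst he; simp
    · have h1 := ih he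
      have h2 : (ℓ + (e + 1)).choose (e + 1)
          = (ℓ + e).choose e + (ℓ + e).choose (e + 1) := by
        have hx : ℓ + (e + 1) = (ℓ + e) + 1 := by omega
        rw [hx, Nat.choose_succ_succ]
      omega

/-- Strict monotonicity of `choose` in the top argument. -/
lemma choose_lt_choose_succ (x k : ℕ) (h : k ≤ x) :
    x.choose (k + 1) < (x + 1).choose (k + 1) := by
  rw [Nat.choose_succ_succ]
  simp only [Nat.succ_eq_add_one]
  have := Nat.choose_pos h
  omega

lemma macaulayMax_spec (ℓ d : ℕ) (hd : 1 ≤ d) : (macaulayMax ℓ d).choose d ≤ ℓ := by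
  have h0 : (0 : ℕ).choose d ≤ ℓ := by
    rw [Nat.choose_eq_zero_of_lt hd]; omega
  exact Nat.findGreatest_spec (P := fun a => Nat.choose a d ≤ ℓ) (Nat.zero_le _) h0

lemma macaulayMax_lt (ℓ d : ℕ) (hd : 1 ≤ d) : ℓ < (macaulayMax ℓ d + 1).choose d := by
  by_contra hcon
  push_neg at hcon
  have hle : macaulayMax ℓ d ≤ ℓ + d := Nat.findGreatest_le _
  have hb : macaulayMax ℓ d + 1 ≤ ℓ + d := by
    by_contra h2
    have heq : macaulayMax ℓ d = ℓ + d := by omega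
    have h3 := choose_lower d ℓ hd
    have h4 : (ℓ + d).choose d ≤ (ℓ + d + 1).choose d :=
      Nat.choose_le_choose d (Nat.le_succ _)
    rw [heq] at hcon
    omega
  exact Nat.findGreatest_is_greatest (Nat.lt_succ_self _) hb hcon

lemma macaulayOp_zero : ∀ d, macaulayOp 0 d = 0
  | 0 => rfl
  | 1 => by simp [macaulayOp]
  | (d + 2) => by
    have hA : (macaulayMax 0 (d + 2)).choose (d + 2) ≤ 0 :=
      macaulayMax_spec 0 (d + 2) (by omega)
    have hlt : macaulayMax 0 (d + 2) < d + 3 := by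
      by_contra hcon
      push_neg at hcon
      have := Nat.choose_pos (show d + 2 ≤ macaulayMax 0 (d + 2) by omega)
      omega
    show Nat.choose (macaulayMax 0 (d + 2)) (d + 3) +
        macaulayOp (0 - Nat.choose (macaulayMax 0 (d + 2)) (d + 2)) (d + 1) = 0
    rw [Nat.choose_eq_zero_of_lt hlt, Nat.zero_sub, macaulayOp_zero (d + 1)]

/-- Key monotone bound: if `ℓ ≤ C(b, d)` then `ℓ^(d) ≤ C(b, d+1)`. -/
lemma macaulayOp_le : ∀ d b ℓ : ℕ, 1 ≤ d → ℓ ≤ b.choose d → macaulayOp ℓ d ≤ b.choose (d + 1) := by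
  intro d
  induction d using Nat.strong_induction_on with
  | _ d ih =>
    rcases d with _ | (_ | d)
    · intro b ℓ hd _; exact absurd hd (by omega)
    · intro b ℓ _ h
      show macaulayOp ℓ 1 ≤ b.choose 2
      have hb : ℓ ≤ b := by simpa using h
      simpa [macaulayOp] using Nat.choose_le_choose 2 hb
    · intro b ℓ _ h
      show macaulayOp ℓ (d + 2) ≤ b.choose (d + 3)
      replace h : ℓ ≤ b.choose (d + 2) := h
      rcases Nat.eq_zero_or_pos ℓ with hℓ | hℓ
      · subst hℓ; rw [macaulayOp_zero]; omega
      have hbpos : 0 < b.choose (d + 2) := by omega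
      have hbd : d + 2 ≤ b := by
        by_contra hcon
        push_neg at hcon
        rw [Nat.choose_eq_zero_of_lt hcon] at hbpos
        omega
      set A := macaulayMax ℓ (d + 2) with hAdef
      have hA1 : A.choose (d + 2) ≤ ℓ := macaulayMax_spec ℓ (d + 2) (by omega)
      have hA2 : ℓ < (A + 1).choose (d + 2) := macaulayMax_lt ℓ (d + 2) (by omega)
      have hAb : A ≤ b := by
        by_contra hcon
        push_neg at hcon
        have h1 : (b + 1).choose (d + 2) ≤ A.choose (d + 2) :=
          Nat.choose_le_choose _ (by omega)
        have h2 : b.choose (d + 2) < (b + 1).choose (d + 2) :=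
          choose_lt_choose_succ b (d + 1) (by omega)
        omega
      show A.choose (d + 3) + macaulayOp (ℓ - A.choose (d + 2)) (d + 1) ≤ b.choose (d + 3)
      rcases eq_or_lt_of_le hAb with hAeq | hAlt
      · have hrest : ℓ - A.choose (d + 2) = 0 := by
          rw [hAeq]; omega
        rw [hrest, macaulayOp_zero]
        have := Nat.choose_le_choose (d + 3) hAb
        omega
      · have hpascal : (A + 1).choose (d + 2) = A.choose (d + 1) + A.choose (d + 2) :=
          Nat.choose_succ_succ _ _
        have hrest : ℓ - A.choose (d + 2) ≤ A.choose (d + 1) := by omega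
        have hrec : macaulayOp (ℓ - A.choose (d + 2)) (d + 1) ≤ A.choose (d + 2) :=
          ih (d + 1) (by omega) A (ℓ - A.choose (d + 2)) (by omega) hrest
        have hpas2 : (A + 1).choose (d + 3) = A.choose (d + 2) + A.choose (d + 3) :=
          Nat.choose_succ_succ _ _
        have hmono : (A + 1).choose (d + 3) ≤ b.choose (d + 3) :=
          Nat.choose_le_choose _ (by omega)
        omega

/-- The key step: if `ℓ ≤ C(m, d) + C(μ, d-1)` with `μ < m`, `d ≥ 2`, then
`ℓ^(d) ≤ C(m, d+1) + C(μ, d)`. -/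
lemma macaulayOp_step (d m μ ℓ : ℕ) (hd : 2 ≤ d) (hμ : μ < m)
    (h : ℓ ≤ m.choose d + μ.choose (d - 1)) :
    macaulayOp ℓ d ≤ m.choose (d + 1) + μ.choose d := by
  by_cases hcase : ℓ ≤ m.choose d
  · exact le_trans (macaulayOp_le d m ℓ (by omega) hcase) (Nat.le_add_right _ _)
  push_neg at hcase
  obtain ⟨e, rfl⟩ : ∃ e, d = e + 2 := ⟨d - 2, by omega⟩
  have hmd : e + 2 ≤ m := by
    by_contra hcon
    push_neg at hcon
    have h0 : m.choose (e + 2) = 0 := Nat.choose_eq_zero_of_lt hcon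
    have h1 : μ.choose (e + 1) = 0 := Nat.choose_eq_zero_of_lt (by omega)
    have h2 : μ.choose ((e + 2) - 1) = 0 := h1
    omega
  have hm_le : m ≤ ℓ + (e + 2) := by
    by_contra hcon
    push_neg at hcon
    have h1 := choose_lower (e + 2) ℓ (by omega)
    have h2 : (ℓ + (e + 2)).choose (e + 2) ≤ m.choose (e + 2) :=
      Nat.choose_le_choose _ (by omega)
    omega
  have hAm : m ≤ macaulayMax ℓ (e + 2) :=
    Nat.le_findGreatest hm_le (le_of_lt hcase)
  have hAle : macaulayMax ℓ (e + 2) ≤ m := by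
    by_contra hcon
    push_neg at hcon
    have hspec := macaulayMax_spec ℓ (e + 2) (by omega)
    have h1 : (m + 1).choose (e + 2) ≤ (macaulayMax ℓ (e + 2)).choose (e + 2) :=
      Nat.choose_le_choose _ (by omega)
    have hpas : (m + 1).choose (e + 2) = m.choose (e + 1) + m.choose (e + 2) :=
      Nat.choose_succ_succ _ _
    have hμlt : μ.choose (e + 1) < m.choose (e + 1) := by
      have ha : μ.choose (e + 1) ≤ (m - 1).choose (e + 1) :=
        Nat.choose_le_choose _ (by omega)
      have hb : (m - 1).choose (e + 1) < ((m - 1) + 1).choose (e + 1) :=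
        choose_lt_choose_succ (m - 1) e (by omega)
      have hc : (m - 1) + 1 = m := by omega
      rw [hc] at hb
      omega
    have h3 : μ.choose ((e + 2) - 1) = μ.choose (e + 1) := rfl
    omega
  have hAeq : macaulayMax ℓ (e + 2) = m := le_antisymm hAle hAm
  show (macaulayMax ℓ (e + 2)).choose (e + 3) +
      macaulayOp (ℓ - (macaulayMax ℓ (e + 2)).choose (e + 2)) (e + 1) ≤ _
  rw [hAeq]
  have hrest : ℓ - m.choose (e + 2) ≤ μ.choose (e + 1) := by
    have h3 : μ.choose ((e + 2) - 1) = μ.choose (e + 1) := rfl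
    omega
  have hrec : macaulayOp (ℓ - m.choose (e + 2)) (e + 1) ≤ μ.choose (e + 2) :=
    macaulayOp_le (e + 1) μ (ℓ - m.choose (e + 2)) (by omega) hrest
  have heq : e + 2 + 1 = e + 3 := by omega
  rw [heq]
  omega

/-- Let `0 ≤ μ < n − α − 1` and let `h : ℕ → ℕ` satisfy `h 2 = C(n−α−1, 2) + μ` and the
Macaulay growth bound `h (d+1) ≤ (h d)^(d)` for `d ≥ 2`. Then whenever
`h d ≤ C(n−α−1, d) + C(μ, d−1)` for some `d ≥ 2`, also
`h (d+1) ≤ C(n−α−1, d+1) + C(μ, d)`; consequently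
`h (n−α) ≤ C(n−α−1, n−α) + C(μ, n−α−1) = 0`. -/
theorem macaulay_growth_vanishing (n α μ : ℕ) (hμ : μ < n - α - 1)
    (h : ℕ → ℕ) (h2 : h 2 = (n - α - 1).choose 2 + μ)
    (hgrow : ∀ d, 2 ≤ d → h (d + 1) ≤ macaulayOp (h d) d) :
    (∀ d, 2 ≤ d → h d ≤ (n - α - 1).choose d + μ.choose (d - 1) →
      h (d + 1) ≤ (n - α - 1).choose (d + 1) + μ.choose d) ∧
    ((n - α - 1).choose (n - α) + μ.choose (n - α - 1) = 0 ∧ h (n - α) = 0) := by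
  set m := n - α - 1 with hm
  have part1 : ∀ d, 2 ≤ d → h d ≤ m.choose d + μ.choose (d - 1) →
      h (d + 1) ≤ m.choose (d + 1) + μ.choose d := by
    intro d hd hle
    exact le_trans (hgrow d hd) (macaulayOp_step d m μ (h d) hd hμ hle)
  refine ⟨part1, ?_, ?_⟩
  · have h1 : m.choose (n - α) = 0 := Nat.choose_eq_zero_of_lt (by omega)
    have h2' : μ.choose m = 0 := Nat.choose_eq_zero_of_lt hμ
    omega
  · have key : ∀ k, h (k + 2) ≤ m.choose (k + 2) + μ.choose (k + 1) := by
      intro k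
      induction k with
      | zero => rw [h2]; simp
      | succ j ih => exact part1 (j + 2) (by omega) ih
    have hna : n - α = (m - 1) + 2 := by omega
    have hfin := key (m - 1)
    have h1 : m.choose ((m - 1) + 2) = 0 := Nat.choose_eq_zero_of_lt (by omega)
    have h2' : μ.choose ((m - 1) + 1) = 0 := Nat.choose_eq_zero_of_lt (by omega)
    rw [hna]
    omega
end

section
/- Let R = K[x₁,...,xₙ] be a polynomial ring over a field K and let f₁,...,fₙ₊₁ be a cryptographic semi-regular sequence of homogeneous polynomials of degrees d₁ ≤ ... ≤ d_{n+1} with d_{n+1} ≤ d₁ + ... + dₙ − n. Then the Hilbert series of R/(f₁,...,f_{n+1}), namely [∏_{i=1}^{n+1}(1−z^{d_i})/(1−z)^n], is a polynomial of degree at most ⌊(d₁+...+d_{n+1}−n−1)/2⌋. -/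
/-!
Since `1 - z^d = (1 - z) [d]_z` with `[d]_z = 1 + z + ⋯ + z^(d-1)`, the series is `(1 - z) Q` for
`Q = ∏ [dᵢ]_z`, a polynomial of degree `D = ∑ dᵢ - n - 1`. Multiplying by `[d]_z` preserves
coefficient sequences that are symmetric about `D / 2` and unimodal, so the coefficients `q_k`
of `Q` weakly decrease past the middle, and the coefficient `q_(m+1) - q_m` of `(1 - z) Q` is
non-positive at `m = ⌊D / 2⌋`.
-/

open Finset PowerSeries

/-- A function `q : ℤ → α` that is symmetric about `D / 2` and nondecreasing up to it. -/
structure IsSymmUnimodal {α : Type*} [Preorder α] (q : ℤ → α) (D : ℤ) : Prop where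
  symm : ∀ k, q (D - k) = q k
  le_of_two_mul_le : ∀ k, 2 * k ≤ D + 1 → q (k - 1) ≤ q k

namespace IsSymmUnimodal

variable {α : Type*} {q : ℤ → α} {D : ℤ}

section Preorder

variable [Preorder α]

theorem le_of_le_of_two_mul_le (h : IsSymmUnimodal q D) {a b : ℤ} (hab : a ≤ b)
    (hb : 2 * b ≤ D + 1) : q a ≤ q b := by
  induction b, hab using Int.leInduction with
  | base => exact le_rfl
  | succ b _ ih => exact (ih (by omega)).trans (by simpa using h.le_of_two_mul_le (b + 1) hb)

theorem le_of_le_of_add_le (h : IsSymmUnimodal q D) {a b : ℤ} (hab : a ≤ b)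
    (hD : a + b ≤ D) : q a ≤ q b := by
  rcases le_or_gt (2 * b) (D + 1) with hb | hb
  · exact h.le_of_le_of_two_mul_le hab hb
  · rw [← h.symm b]
    exact h.le_of_le_of_two_mul_le (by omega) (by omega)

theorem succ_le_of_le_two_mul_add_one (h : IsSymmUnimodal q D) {k : ℤ} (hk : D ≤ 2 * k + 1) :
    q (k + 1) ≤ q k := by
  rw [← h.symm (k + 1)]
  exact h.le_of_le_of_add_le (by omega) (by omega)

end Preorder

section OrderedGroup

variable [AddCommGroup α] [PartialOrder α] [IsOrderedAddMonoid α]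

/-- The coefficients of a product with `1 + z + ⋯ + z^(e-1)`. -/
theorem sum_range_sub (h : IsSymmUnimodal q D) (e : ℕ) :
    IsSymmUnimodal (fun k => ∑ j ∈ range e, q (k - j)) (D + e - 1) where
  symm k := by
    rw [← sum_range_reflect]
    refine sum_congr rfl fun j hj => ?_
    rw [← h.symm]
    congr 1
    have := mem_range.mp hj
    omega
  le_of_two_mul_le k hk := by
    have hshift : ∑ j ∈ range e, q (k - 1 - j) + q k = ∑ j ∈ range e, q (k - j) + q (k - e) := by
      rw [← sum_range_succ, sum_range_succ']
      simp only [Nat.cast_add, Nat.cast_one, Nat.cast_zero, sub_zero, sub_add_eq_sub_sub,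
        sub_right_comm]
    have hedge : q (k - e) ≤ q k := h.le_of_le_of_add_le (by omega) (by omega)
    exact le_of_add_le_add_right (a := q k) (hshift.trans_le (by gcongr))

end OrderedGroup

end IsSymmUnimodal

namespace PowerSeries

variable {R : Type*}

/-- Indexing by `ℤ` lets the symmetry `k ↦ D - k` be stated without truncated subtraction. -/
noncomputable def coeffInt [Semiring R] (f : R⟦X⟧) (k : ℤ) : R :=
  if 0 ≤ k then coeff k.toNat f else 0

section Semiring

variable [Semiring R]

@[simp]
theorem coeffInt_natCast (f : R⟦X⟧) (n : ℕ) : coeffInt f n = coeff n f := by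
  simp [coeffInt]

theorem coeffInt_mul_X_pow (f : R⟦X⟧) (j : ℕ) (k : ℤ) :
    coeffInt (f * X ^ j) k = coeffInt f (k - j) := by
  unfold coeffInt
  split_ifs with hk hkj hkj
  · rw [coeff_mul_X_pow', if_pos (by omega), show (k - j).toNat = k.toNat - j by omega]
  · rw [coeff_mul_X_pow', if_neg (by omega)]
  · omega
  · rfl

theorem coeffInt_sum {ι : Type*} (s : Finset ι) (f : ι → R⟦X⟧) (k : ℤ) :
    coeffInt (∑ i ∈ s, f i) k = ∑ i ∈ s, coeffInt (f i) k := by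
  unfold coeffInt
  split_ifs <;> simp

theorem coeffInt_mul_geom_sum (f : R⟦X⟧) (e : ℕ) (k : ℤ) :
    coeffInt (f * ∑ j ∈ range e, X ^ j) k = ∑ j ∈ range e, coeffInt f (k - j) := by
  simp only [mul_sum, coeffInt_sum, coeffInt_mul_X_pow]

end Semiring

theorem coeffInt_one [Semiring R] (k : ℤ) : coeffInt (1 : R⟦X⟧) k = if k = 0 then 1 else 0 := by
  rcases lt_or_ge k 0 with hk | hk
  · simp [coeffInt, hk.not_ge, hk.ne]
  · lift k to ℕ using hk
    simp [coeff_one]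

theorem isSymmUnimodal_coeffInt_one [Semiring R] [PartialOrder R] [ZeroLEOneClass R] :
    IsSymmUnimodal (coeffInt (1 : R⟦X⟧)) 0 where
  symm k := by simp [coeffInt_one]
  le_of_two_mul_le k hk := by
    simp only [coeffInt_one]
    split_ifs <;> first | omega | exact le_rfl | exact zero_le_one

theorem isSymmUnimodal_coeffInt_prod_geom_sum [CommRing R] [PartialOrder R] [IsOrderedRing R]
    {ι : Type*} (s : Finset ι) (d : ι → ℕ) :
    IsSymmUnimodal (coeffInt (∏ i ∈ s, ∑ j ∈ range (d i), (X : R⟦X⟧) ^ j))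
      (∑ i ∈ s, ((d i : ℤ) - 1)) := by
  classical
  induction s using Finset.induction_on with
  | empty => simpa using isSymmUnimodal_coeffInt_one
  | insert a s ha ih =>
    rw [prod_insert ha, sum_insert ha, mul_comm]
    convert ih.sum_range_sub (d a) using 1
    · funext k
      exact coeffInt_mul_geom_sum _ _ k
    · ring

theorem coeff_succ_one_sub_X_mul [Ring R] (n : ℕ) (f : R⟦X⟧) :
    coeff (n + 1) ((1 - X) * f) = coeff (n + 1) f - coeff n f := by
  rw [sub_mul, one_mul, map_sub, coeff_succ_X_mul]

theorem prod_one_sub_X_pow_mul_inv {K : Type*} [Field K] (n : ℕ) (d : Fin (n + 1) → ℕ) :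
    (∏ i, (1 - X ^ d i : K⟦X⟧)) * ((1 - X) ^ n)⁻¹ = (1 - X) * ∏ i, ∑ j ∈ range (d i), X ^ j := by
  have hunit : constantCoeff ((1 - X : K⟦X⟧) ^ n) ≠ 0 := by simp
  simp_rw [← mul_neg_geom_sum, prod_mul_distrib, prod_const, card_univ, Fintype.card_fin]
  linear_combination (1 - X) * (∏ i, ∑ j ∈ range (d i), X ^ j) * PowerSeries.mul_inv_cancel _ hunit

end PowerSeries

theorem semiregular_hilbert_series_degree_bound_general (n : ℕ)
    (d : Fin (n + 1) → ℕ) :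
    PowerSeries.coeff (R := ℚ) (((∑ i : Fin (n + 1), d i) - n - 1) / 2 + 1)
        ((∏ i : Fin (n + 1), (1 - PowerSeries.X ^ (d i) : PowerSeries ℚ)) *
          ((1 - PowerSeries.X : PowerSeries ℚ) ^ n)⁻¹) ≤ 0 := by
  set m := ((∑ i, d i) - n - 1) / 2
  rw [prod_one_sub_X_pow_mul_inv, coeff_succ_one_sub_X_mul, sub_nonpos]
  have hdeg : ∑ i, ((d i : ℤ) - 1) ≤ 2 * m + 1 := by
    simp only [sum_sub_distrib, sum_const, card_univ, Fintype.card_fin, nsmul_eq_mul, mul_one,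
      ← Nat.cast_sum]
    omega
  exact_mod_cast (isSymmUnimodal_coeffInt_prod_geom_sum univ d).succ_le_of_le_two_mul_add_one hdeg

/-- Let `d₁ ≤ ⋯ ≤ d_{n+1}` with `d_{n+1} ≤ d₁ + ⋯ + dₙ − n`. Then the truncated
series `[∏_{i=1}^{n+1}(1−z^{dᵢ})/(1−z)^n]` (the Hilbert series of a cryptographic
semi-regular sequence of these degrees) is a polynomial of degree at most
`⌊(d₁+⋯+d_{n+1}−n−1)/2⌋`; equivalently, the coefficient of `z^k` in
`∏(1−z^{dᵢ})/(1−z)^n` is non-positive for `k = ⌊(d₁+⋯+d_{n+1}−n−1)/2⌋ + 1`. -/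
theorem semiregular_hilbert_series_degree_bound (n : ℕ) (hn : 0 < n)
    (d : Fin (n + 1) → ℕ) (hd2 : ∀ i, 2 ≤ d i) (hmono : Monotone d)
    (hlast : d (Fin.last n) ≤ (∑ i : Fin n, d i.castSucc) - n) :
    PowerSeries.coeff (R := ℚ) (((∑ i : Fin (n + 1), d i) - n - 1) / 2 + 1)
        ((∏ i : Fin (n + 1), (1 - PowerSeries.X ^ (d i) : PowerSeries ℚ)) *
          ((1 - PowerSeries.X : PowerSeries ℚ) ^ n)⁻¹) ≤ 0 :=
  semiregular_hilbert_series_degree_bound_general n d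
end

section
/- For a positive integer n, the cubic polynomial f(3,k) = −8k³ + 12(6+n)k² − 2(92 + 33n + 3n²)k + n³ + 15n² + 74n + 120 in the real variable k factors as f(3,k) = −8(k − k₁)(k − k₂)(k − k₃) where k₁ = (6 + n − √(16 + 3n))/2, k₂ = (6 + n)/2, k₃ = (6 + n + √(16 + 3n))/2; in particular f(3,k) > 0 for k < k₁ and f(3,k) < 0 for k₁ < k < k₂. -/
/-- The cubic `f(3,k)` factors as `−8(k − k₁)(k − k₂)(k − k₃)` with
`k₁ = (6+n−√(16+3n))/2`, `k₂ = (6+n)/2`, `k₃ = (6+n+√(16+3n))/2`;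
in particular it is positive for `k < k₁` and negative for `k₁ < k < k₂`. -/
theorem cubic_sign_n_plus_three (n : ℕ) (hn : 0 < n) :
    (∀ k : ℝ,
      -8 * k ^ 3 + 12 * (6 + n) * k ^ 2 - 2 * (92 + 33 * n + 3 * n ^ 2) * k
        + n ^ 3 + 15 * n ^ 2 + 74 * n + 120 =
      -8 * (k - (6 + n - Real.sqrt (16 + 3 * n)) / 2) * (k - (6 + n) / 2)
        * (k - (6 + n + Real.sqrt (16 + 3 * n)) / 2)) ∧
    (∀ k : ℝ, k < (6 + n - Real.sqrt (16 + 3 * n)) / 2 →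
      0 < -8 * k ^ 3 + 12 * (6 + n) * k ^ 2 - 2 * (92 + 33 * n + 3 * n ^ 2) * k
        + n ^ 3 + 15 * n ^ 2 + 74 * n + 120) ∧
    (∀ k : ℝ, (6 + n - Real.sqrt (16 + 3 * n)) / 2 < k → k < (6 + n) / 2 →
      -8 * k ^ 3 + 12 * (6 + n) * k ^ 2 - 2 * (92 + 33 * n + 3 * n ^ 2) * k
        + n ^ 3 + 15 * n ^ 2 + 74 * n + 120 < 0) := by
  set s : ℝ := Real.sqrt (16 + 3 * n) with hs
  have hnn : (0:ℝ) ≤ 16 + 3 * n := by positivity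
  have hs2 : s ^ 2 = 16 + 3 * n := Real.sq_sqrt hnn
  have hspos : 0 < s := Real.sqrt_pos.mpr (by positivity)
  have hfac : ∀ k : ℝ,
      -8 * k ^ 3 + 12 * (6 + n) * k ^ 2 - 2 * (92 + 33 * n + 3 * n ^ 2) * k
        + n ^ 3 + 15 * n ^ 2 + 74 * n + 120 =
      -8 * (k - (6 + n - s) / 2) * (k - (6 + n) / 2)
        * (k - (6 + n + s) / 2) := by
    intro k
    linear_combination (-2 * (k - (6 + (n:ℝ)) / 2)) * hs2
  refine ⟨hfac, ?_, ?_⟩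
  · intro k hk
    rw [hfac k]
    have h2 : k - (6 + n) / 2 < 0 := by nlinarith
    have h3 : k - (6 + n + s) / 2 < 0 := by nlinarith
    have h1 : k - (6 + n - s) / 2 < 0 := by linarith
    have h4 : -8 * (k - (6 + (n:ℝ) - s) / 2) > 0 := by linarith
    exact mul_pos_of_neg_of_neg (mul_neg_of_pos_of_neg h4 h2) h3
  · intro k hk1 hk2
    rw [hfac k]
    have h1 : 0 < k - (6 + n - s) / 2 := by linarith
    have h2 : k - (6 + n) / 2 < 0 := by linarith
    have h3 : k - (6 + n + s) / 2 < 0 := by linarith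
    have h4 : -8 * (k - (6 + (n:ℝ) - s) / 2) < 0 := by linarith
    exact mul_neg_of_pos_of_neg (mul_pos_of_neg_of_neg h4 h2) h3
end
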